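/- arXiv:2503.12639 — 2 statements merged into one kernel-verified Lean document; each statement's English description precedes it below -/
import Mathlib

section
/- Fix a ∈ ℝ, ε > 0, N ∈ ℕ with N ≥ 2, and B > b where b := √((|a| + ε²)/3). Let θ : ℝ → ℂ be Lebesgue integrable and bounded, and suppose there exist a function ψ defined on {λ ∈ ℝ : |λ| ≥ B} and a function φ holomorphic on an open subset of ℂ containing the closed set R := {z − iy : z ∈ ℝ, |z| ≥ B, 0 ≤ y ≤ ε}, such that: θ(λ) = φ(λ) + ψ(λ) for all real λ with |λ| ≥ B; there is K > 0 with |ψ(λ)| ≤ K·|λ|^(−N) for all real λ with |λ| ≥ B; and max_{y∈[0,ε]} |φ(C − iy)| → 0 as C → ±∞. Fix M ∈ {0, 1, …, N−2}, τ > 0, and ξ ∈ ℝ. For C > B and (x,t) ∈ ℝ², define F_C(x,t) := ∫_{−B}^{B} E(λ;x,t)λ^M θ(λ) dλ + ∫_{B}^{C} ( E(λ;x,t)λ^M ψ(λ) + E(−λ;x,t)(−λ)^M ψ(−λ) ) dλ + ∫_{B}^{C} ( E(z−iε;x,t)(z−iε)^M φ(z−iε) + E(−z−iε;x,t)(−z−iε)^M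 φ(−z−iε) ) dz + i∫_{0}^{ε} E(−B−iy;x,t)(−B−iy)^M φ(−B−iy) dy − i∫_{0}^{ε} E(B−iy;x,t)(B−iy)^M φ(B−iy) dy. Then there exists a function F : ℝ² → ℂ such that F_C → F as C → ∞, uniformly on the set (−∞, ξ] × [τ, ∞) of pairs (x,t). -/
/-!
Only the two integrals over `[B, C]` depend on `C`, and each converges uniformly because its
integrand is dominated, uniformly in `(x, t)`, by an integrable function of the integration
variable. On the real axis `|E| = 1` and `|λ^M ψ(λ)| ≤ K λ^(M-N)` with `M - N ≤ -2`. On the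
line `ℝ - iε`, `|E(z - iε; x, t)| = exp(εx - tε(3z² - ε² - a))`, and `3B² > |a| + ε²` turns
this into the Gaussian bound `exp(εξ + τε(ε² + a)) exp(-3τεz²)` for `x ≤ ξ`, `t ≥ τ`; there
`φ` is bounded, by continuity on compacts and by the decay of its vertical maxima at `±∞`.
-/

open Complex Filter Set MeasureTheory intervalIntegral

/-- `E(λ; x, t) = exp(iλx − i(λ³ − aλ)t)`. -/
noncomputable def E (a : ℝ) (lam : ℂ) (x t : ℝ) : ℂ :=
  Complex.exp (Complex.I * lam * x - Complex.I * (lam ^ 3 - (a : ℂ) * lam) * t)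

open Topology

theorem tendstoUniformlyOn_const_self {ι α β : Type*} [UniformSpace β] (l : Filter ι)
    (f : α → β) (s : Set α) : TendstoUniformlyOn (fun _ => f) f l s :=
  tendstoUniformlyOn_iff_tendsto.2 (tendsto_diag_uniformity _ _)

theorem tendstoUniformlyOn_intervalIntegral_of_dominated {α G : Type*} [NormedAddCommGroup G]
    [NormedSpace ℝ G] {f : α → ℝ → G} {g : ℝ → ℝ} {s : Set α} {b : ℝ}
    (hg : IntegrableOn g (Ioi b))
    (hfm : ∀ p ∈ s, AEStronglyMeasurable (f p) (volume.restrict (Ioi b)))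
    (hfg : ∀ p ∈ s, ∀ x ∈ Ioi b, ‖f p x‖ ≤ g x) :
    TendstoUniformlyOn (fun c p => ∫ x in b..c, f p x) (fun p => ∫ x in Ioi b, f p x)
      atTop s := by
  have hfi : ∀ p ∈ s, IntegrableOn (f p) (Ioi b) := fun p hp =>
    hg.mono' (hfm p hp) ((ae_restrict_iff' measurableSet_Ioi).2 (ae_of_all _ (hfg p hp)))
  rw [Metric.tendstoUniformlyOn_iff]
  intro δ hδ
  filter_upwards [(tendsto_integral_Ioi_zero (f := g) tendsto_id).eventually_lt_const hδ,
    eventually_ge_atTop b] with c hc hbc p hp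
  have hcb : Ioi c ⊆ Ioi b := Ioi_subset_Ioi hbc
  rw [dist_eq_norm, ← integral_interval_add_Ioi (hfi p hp) ((hfi p hp).mono_set hcb),
    add_sub_cancel_left]
  calc ‖∫ x in Ioi c, f p x‖ ≤ ∫ x in Ioi c, g x :=
        norm_integral_le_of_norm_le (hg.mono_set hcb)
          ((ae_restrict_iff' measurableSet_Ioi).2 (ae_of_all _ fun x hx => hfg p hp x (hcb hx)))
    _ < δ := hc

theorem bddAbove_image_of_continuousOn_of_eventually_le {X Y : Type*} [TopologicalSpace X]
    [LinearOrder Y] [TopologicalSpace Y] [ClosedIciTopology Y] {f : X → Y} {s : Set X}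
    (hs : IsClosed s) (hf : ContinuousOn f s) {c : Y}
    (hc : ∀ᶠ x in cocompact X, x ∈ s → f x ≤ c) : BddAbove (f '' s) := by
  have : Nonempty Y := ⟨c⟩
  obtain ⟨K, hK, hKc⟩ := mem_cocompact.1 hc
  obtain ⟨d, hd⟩ := (hK.inter_right hs).bddAbove_image (hf.mono inter_subset_right)
  refine ⟨max c d, ?_⟩
  rintro _ ⟨x, hx, rfl⟩
  by_cases hxK : x ∈ K
  · exact (hd ⟨x, ⟨hxK, hx⟩, rfl⟩).trans (le_max_right _ _)
  · exact (hKc hxK hx).trans (le_max_left _ _)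

@[fun_prop]
theorem continuous_E (a x t : ℝ) : Continuous fun w : ℂ => E a w x t := by
  unfold E; fun_prop

theorem norm_E_ofReal (a lam x t : ℝ) : ‖E a lam x t‖ = 1 := by
  rw [E, Complex.norm_exp]; simp [pow_succ]

theorem norm_E_ofReal_sub_I_mul (a z y x t : ℝ) :
    ‖E a ((z : ℂ) - I * y) x t‖ = Real.exp (y * x - t * y * (3 * z ^ 2 - y ^ 2 - a)) := by
  rw [E, Complex.norm_exp, Real.exp_eq_exp]
  simp only [pow_succ, pow_zero, one_mul, sub_re, mul_re, sub_im, mul_im, I_re, I_im, ofReal_re,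
    ofReal_im]
  ring

def contourRegion (B ε : ℝ) : Set ℂ :=
  {w : ℂ | ∃ z y : ℝ, B ≤ |z| ∧ 0 ≤ y ∧ y ≤ ε ∧ w = (z : ℂ) - I * y}

section ContourRegion

variable {φ : ℂ → ℂ} {B ε : ℝ}

theorem ofReal_sub_I_mul_mem_contourRegion {z y : ℝ} (hz : B ≤ |z|) (hy : y ∈ Icc 0 ε) :
    (z : ℂ) - I * y ∈ contourRegion B ε :=
  ⟨z, y, hz, hy.1, hy.2, rfl⟩

theorem ContinuousOn.comp_ofReal_sub_I_mul (hφ : ContinuousOn φ (contourRegion B ε)) {y : ℝ}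
    (hy : y ∈ Icc 0 ε) : ContinuousOn (fun z : ℝ => φ (z - I * y)) {z | B ≤ |z|} :=
  hφ.comp (by fun_prop) fun _ hz => ofReal_sub_I_mul_mem_contourRegion hz hy

theorem ContinuousOn.comp_sub_I_mul_ofReal (hφ : ContinuousOn φ (contourRegion B ε)) {z : ℝ}
    (hz : B ≤ |z|) : ContinuousOn (fun y : ℝ => φ (z - I * y)) (Icc 0 ε) :=
  hφ.comp (by fun_prop) fun _ hy => ofReal_sub_I_mul_mem_contourRegion hz hy

theorem ContinuousOn.comp_ofReal_of_contourRegion (hφ : ContinuousOn φ (contourRegion B ε))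
    (hε : 0 ≤ ε) : ContinuousOn (fun z : ℝ => φ z) {z | B ≤ |z|} := by
  simpa using hφ.comp_ofReal_sub_I_mul (y := 0) ⟨le_rfl, hε⟩

theorem bddAbove_norm_comp_ofReal_sub_I_mul (hε : 0 ≤ ε)
    (hφ : ContinuousOn φ (contourRegion B ε))
    (hφtop : Tendsto (fun C : ℝ => sSup ((fun y : ℝ => ‖φ ((C : ℂ) - I * y)‖) '' Icc 0 ε))
      atTop (𝓝 0))
    (hφbot : Tendsto (fun C : ℝ => sSup ((fun y : ℝ => ‖φ ((C : ℂ) - I * y)‖) '' Icc 0 ε))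
      atBot (𝓝 0)) :
    BddAbove ((fun z : ℝ => ‖φ (z - I * ε)‖) '' {z | B ≤ |z|}) := by
  have hle_sSup : ∀ z : ℝ, B ≤ |z| →
      ‖φ (z - I * ε)‖ ≤ sSup ((fun y : ℝ => ‖φ ((z : ℂ) - I * y)‖) '' Icc 0 ε) := fun z hz =>
    le_csSup (isCompact_Icc.bddAbove_image (hφ.comp_sub_I_mul_ofReal hz).norm)
      ⟨ε, ⟨hε, le_rfl⟩, rfl⟩
  refine bddAbove_image_of_continuousOn_of_eventually_le (c := 1)
    (isClosed_le continuous_const continuous_abs) (hφ.comp_ofReal_sub_I_mul ⟨hε, le_rfl⟩).norm ?_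
  rw [cocompact_eq_atBot_atTop, eventually_sup]
  constructor
  · filter_upwards [hφbot.eventually_lt_const one_pos] with z hz hzB
    exact (hle_sSup z hzB).trans hz.le
  · filter_upwards [hφtop.eventually_lt_const one_pos] with z hz hzB
    exact (hle_sSup z hzB).trans hz.le

end ContourRegion

theorem aestronglyMeasurable_restrict_of_eq_add {μ : Measure ℝ} {θ ψ f : ℝ → ℂ} {s : Set ℝ}
    (hs : MeasurableSet s) (hθ : AEStronglyMeasurable θ μ) (hf : ContinuousOn f s)
    (h : ∀ x ∈ s, θ x = f x + ψ x) : AEStronglyMeasurable ψ (μ.restrict s) :=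
  (hθ.restrict.sub (hf.aestronglyMeasurable hs)).congr
    ((ae_restrict_iff' hs).2 (ae_of_all _ fun x hx => by simp [h x hx]))

theorem norm_E_mul_pow_mul_le (a x t : ℝ) (M N : ℕ) {w K : ℝ} (hw : w ≠ 0) {c : ℂ}
    (hc : ‖c‖ ≤ K / |w| ^ N) : ‖E a w x t * (w : ℂ) ^ M * c‖ ≤ K * |w| ^ ((M : ℝ) - N) := by
  rw [norm_mul, norm_mul, norm_E_ofReal, norm_pow, norm_real, Real.norm_eq_abs, one_mul,
    Real.rpow_sub (abs_pos.2 hw), Real.rpow_natCast, Real.rpow_natCast]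
  calc |w| ^ M * ‖c‖ ≤ |w| ^ M * (K / |w| ^ N) := by gcongr
    _ = K * (|w| ^ M / |w| ^ N) := by ring

theorem tendstoUniformly_intervalIntegral_real_tail (a : ℝ) (M : ℕ) {B K : ℝ} (hB : 0 < B)
    {N : ℕ} (hMN : M + 2 ≤ N)
    {ψ : ℝ → ℂ} (hψm : AEStronglyMeasurable ψ (volume.restrict {lam | B ≤ |lam|}))
    (hψ : ∀ lam : ℝ, B ≤ |lam| → ‖ψ lam‖ ≤ K / |lam| ^ N) :
    TendstoUniformly
      (fun (C : ℝ) (p : ℝ × ℝ) => ∫ lam in B..C,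
        (E a lam p.1 p.2 * (lam : ℂ) ^ M * ψ lam
          + E a (-(lam : ℂ)) p.1 p.2 * (-(lam : ℂ)) ^ M * ψ (-lam)))
      (fun p => ∫ lam in Ioi B,
        (E a lam p.1 p.2 * (lam : ℂ) ^ M * ψ lam
          + E a (-(lam : ℂ)) p.1 p.2 * (-(lam : ℂ)) ^ M * ψ (-lam))) atTop := by
  have hMN' : (M : ℝ) - N < -1 := by
    have : (M : ℝ) + 2 ≤ N := by exact_mod_cast hMN
    linarith
  have hIoi : Ioi B ⊆ {lam : ℝ | B ≤ |lam|} := fun lam (hlam : B < lam) =>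
    le_abs.2 (Or.inl hlam.le)
  have hψneg : AEStronglyMeasurable (fun lam => ψ (-lam))
      (volume.restrict {lam : ℝ | B ≤ |lam|}) := by
    have := (Measure.measurePreserving_neg (volume : Measure ℝ)).restrict_preimage
      (measurableSet_le measurable_const measurable_abs : MeasurableSet {lam : ℝ | B ≤ |lam|})
    simp only [preimage_ofPred_eq, abs_neg] at this
    exact hψm.comp_measurePreserving this
  rw [← tendstoUniformlyOn_univ]
  refine tendstoUniformlyOn_intervalIntegral_of_dominated
    ((integrableOn_Ioi_rpow_of_lt hMN' hB).const_mul (2 * K)) (fun p _ => ?_)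
    (fun p _ lam hlam => ?_)
  · refine AEStronglyMeasurable.mono_measure ?_ (Measure.restrict_mono hIoi le_rfl)
    exact ((by fun_prop : Continuous fun lam : ℝ => E a lam p.1 p.2 * (lam : ℂ) ^ M)
      |>.aestronglyMeasurable.mul hψm).add
      ((by fun_prop : Continuous fun lam : ℝ => E a (-(lam : ℂ)) p.1 p.2 * (-(lam : ℂ)) ^ M)
      |>.aestronglyMeasurable.mul hψneg)
  · have hlam0 : 0 < lam := hB.trans hlam
    have h1 := norm_E_mul_pow_mul_le a p.1 p.2 M N hlam0.ne' (hψ lam (hIoi hlam))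
    have h2 := norm_E_mul_pow_mul_le a p.1 p.2 M N (neg_ne_zero.2 hlam0.ne')
      (hψ (-lam) (by simpa using hIoi hlam))
    push_cast at h2
    rw [abs_neg] at h2
    rw [abs_of_pos hlam0] at h1 h2
    calc _ ≤ _ := norm_add_le _ _
      _ ≤ _ := add_le_add h1 h2
      _ = _ := by ring

theorem norm_ofReal_sub_I_mul_le {B y z : ℝ} (hB : 0 < B) (hy : 0 ≤ y) (hz : B ≤ |z|) :
    ‖(z : ℂ) - I * y‖ ≤ (1 + y / B) * |z| := by
  have hyz : y ≤ y / B * |z| := by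
    rw [div_mul_eq_mul_div, le_div_iff₀ hB]
    exact mul_le_mul_of_nonneg_left hz hy
  calc ‖(z : ℂ) - I * y‖ ≤ ‖(z : ℂ)‖ + ‖I * (y : ℂ)‖ := norm_sub_le _ _
    _ = |z| + y := by simp [abs_of_nonneg hy]
    _ ≤ (1 + y / B) * |z| := by linarith

theorem norm_E_ofReal_sub_I_mul_le {a ε B τ ξ x t z : ℝ} (hε : 0 < ε) (hB0 : 0 ≤ B)
    (hB : |a| + ε ^ 2 < 3 * B ^ 2) (hz : B ≤ |z|) (hx : x ≤ ξ) (ht : τ ≤ t) :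
    ‖E a ((z : ℂ) - I * ε) x t‖
      ≤ Real.exp (ε * ξ + τ * ε * (ε ^ 2 + a)) * Real.exp (-(3 * τ * ε) * z ^ 2) := by
  rw [norm_E_ofReal_sub_I_mul, ← Real.exp_add, Real.exp_le_exp]
  have hBz : B ^ 2 ≤ z ^ 2 := by rw [← sq_abs z]; gcongr
  have hQ : 0 ≤ 3 * z ^ 2 - ε ^ 2 - a := by linarith [le_abs_self a]
  nlinarith [mul_nonneg (mul_nonneg (sub_nonneg.2 ht) hε.le) hQ,
    mul_le_mul_of_nonneg_left hx hε.le]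

theorem norm_E_mul_pow_mul_le_gaussian {a ε B τ ξ x t z Φ : ℝ} (M : ℕ) (hε : 0 < ε)
    (hB0 : 0 < B) (hB : |a| + ε ^ 2 < 3 * B ^ 2) (hz : B ≤ |z|) (hx : x ≤ ξ) (ht : τ ≤ t)
    {c : ℂ} (hc : ‖c‖ ≤ Φ) :
    ‖E a ((z : ℂ) - I * ε) x t * ((z : ℂ) - I * ε) ^ M * c‖
      ≤ Real.exp (ε * ξ + τ * ε * (ε ^ 2 + a)) * (1 + ε / B) ^ M * Φ
        * (|z| ^ M * Real.exp (-(3 * τ * ε) * z ^ 2)) := by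
  rw [norm_mul, norm_mul, norm_pow]
  have hE := norm_E_ofReal_sub_I_mul_le hε hB0.le hB hz hx ht
  have hw := norm_ofReal_sub_I_mul_le hB0 hε.le hz
  calc _ ≤ Real.exp (ε * ξ + τ * ε * (ε ^ 2 + a)) * Real.exp (-(3 * τ * ε) * z ^ 2)
        * ((1 + ε / B) * |z|) ^ M * Φ := by gcongr
    _ = _ := by rw [mul_pow]; ring

theorem tendstoUniformlyOn_intervalIntegral_lowerEdge_tail {a ε B τ Φ : ℝ} (ξ : ℝ) (M : ℕ)
    (hε : 0 < ε) (hB0 : 0 < B) (hB : |a| + ε ^ 2 < 3 * B ^ 2) (hτ : 0 < τ) {φ : ℂ → ℂ}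
    (hφ : ContinuousOn (fun z : ℝ => φ (z - I * ε)) {z | B ≤ |z|})
    (hΦ : ∀ z : ℝ, B ≤ |z| → ‖φ (z - I * ε)‖ ≤ Φ) :
    TendstoUniformlyOn
      (fun (C : ℝ) (p : ℝ × ℝ) => ∫ z in B..C,
        (E a ((z : ℂ) - Complex.I * ε) p.1 p.2 * ((z : ℂ) - Complex.I * ε) ^ M
            * φ ((z : ℂ) - Complex.I * ε)
          + E a (-(z : ℂ) - Complex.I * ε) p.1 p.2 * (-(z : ℂ) - Complex.I * ε) ^ M
            * φ (-(z : ℂ) - Complex.I * ε)))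
      (fun p => ∫ z in Ioi B,
        (E a ((z : ℂ) - Complex.I * ε) p.1 p.2 * ((z : ℂ) - Complex.I * ε) ^ M
            * φ ((z : ℂ) - Complex.I * ε)
          + E a (-(z : ℂ) - Complex.I * ε) p.1 p.2 * (-(z : ℂ) - Complex.I * ε) ^ M
            * φ (-(z : ℂ) - Complex.I * ε)))
      atTop (Iic ξ ×ˢ Ici τ) := by
  have hgauss : IntegrableOn (fun z : ℝ => z ^ M * Real.exp (-(3 * τ * ε) * z ^ 2)) (Ioi B) := by
    have h := integrableOn_rpow_mul_exp_neg_mul_sq (by positivity : 0 < 3 * τ * ε)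
      (s := M) (by linarith [M.cast_nonneg (α := ℝ)])
    simp only [Real.rpow_natCast] at h
    exact h.mono_set (Ioi_subset_Ioi hB0.le)
  have hIoi : Ioi B ⊆ {z : ℝ | B ≤ |z|} := fun z (hz : B < z) => le_abs.2 (Or.inl hz.le)
  have hφneg : ContinuousOn (fun z : ℝ => φ (-z - I * ε)) {z | B ≤ |z|} := by
    refine (hφ.comp continuous_neg.continuousOn fun z (hz : B ≤ |z|) => ?_).congr fun z _ => ?_
    · simpa using hz
    · simp
  refine tendstoUniformlyOn_intervalIntegral_of_dominated
    (hgauss.const_mul (2 * (Real.exp (ε * ξ + τ * ε * (ε ^ 2 + a)) * (1 + ε / B) ^ M * Φ)))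
    (fun p _ => ?_) (fun p hp z hz => ?_)
  · refine AEStronglyMeasurable.mono_measure ?_ (Measure.restrict_mono hIoi le_rfl)
    have hs : MeasurableSet {z : ℝ | B ≤ |z|} := measurableSet_le measurable_const measurable_abs
    exact ((by fun_prop : Continuous fun z : ℝ =>
        E a ((z : ℂ) - I * ε) p.1 p.2 * ((z : ℂ) - I * ε) ^ M)
      |>.aestronglyMeasurable.mul (hφ.aestronglyMeasurable hs)).add
      ((by fun_prop : Continuous fun z : ℝ =>
        E a (-(z : ℂ) - I * ε) p.1 p.2 * (-(z : ℂ) - I * ε) ^ M)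
      |>.aestronglyMeasurable.mul (hφneg.aestronglyMeasurable hs))
  · have hz0 : 0 < z := hB0.trans hz
    have hnz : B ≤ |-z| := by simpa using hIoi hz
    have h1 := norm_E_mul_pow_mul_le_gaussian M hε hB0 hB (hIoi hz) hp.1 hp.2 (hΦ z (hIoi hz))
    have h2 := norm_E_mul_pow_mul_le_gaussian M hε hB0 hB hnz hp.1 hp.2 (hΦ (-z) hnz)
    push_cast at h2
    rw [abs_neg, neg_sq] at h2
    rw [abs_of_pos hz0] at h1 h2
    calc _ ≤ _ := norm_add_le _ _
      _ ≤ _ := add_le_add h1 h2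
      _ = _ := by ring

theorem stmt_1_general (a ε : ℝ) (hε : 0 < ε) (N : ℕ) (hN : 2 ≤ N) (B : ℝ)
    (hB : B > Real.sqrt ((|a| + ε ^ 2) / 3))
    (θ : ℝ → ℂ) (hθint : Integrable θ)
    (ψ : ℝ → ℂ) (φ : ℂ → ℂ) (U : Set ℂ)
    (hRU : {w : ℂ | ∃ z y : ℝ, B ≤ |z| ∧ 0 ≤ y ∧ y ≤ ε ∧ w = (z : ℂ) - Complex.I * y} ⊆ U)
    (hφhol : DifferentiableOn ℂ φ U)
    (hsum : ∀ lam : ℝ, B ≤ |lam| → θ lam = φ lam + ψ lam)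
    (K : ℝ)
    (hψ : ∀ lam : ℝ, B ≤ |lam| → ‖ψ lam‖ ≤ K / |lam| ^ N)
    (hφtop : Tendsto (fun C : ℝ =>
        sSup ((fun y : ℝ => ‖φ ((C : ℂ) - Complex.I * y)‖) '' Icc 0 ε))
      atTop (nhds 0))
    (hφbot : Tendsto (fun C : ℝ =>
        sSup ((fun y : ℝ => ‖φ ((C : ℂ) - Complex.I * y)‖) '' Icc 0 ε))
      atBot (nhds 0))
    (M : ℕ) (hM : M ≤ N - 2) (τ : ℝ) (hτ : 0 < τ) (ξ : ℝ) :
    ∃ F : ℝ × ℝ → ℂ,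
      TendstoUniformlyOn
        (fun (C : ℝ) (p : ℝ × ℝ) =>
          (∫ lam in (-B)..B, E a lam p.1 p.2 * (lam : ℂ) ^ M * θ lam)
          + (∫ lam in B..C,
              (E a lam p.1 p.2 * (lam : ℂ) ^ M * ψ lam
                + E a (-(lam : ℂ)) p.1 p.2 * (-(lam : ℂ)) ^ M * ψ (-lam)))
          + (∫ z in B..C,
              (E a ((z : ℂ) - Complex.I * ε) p.1 p.2 * ((z : ℂ) - Complex.I * ε) ^ M
                  * φ ((z : ℂ) - Complex.I * ε)
                + E a (-(z : ℂ) - Complex.I * ε) p.1 p.2 * (-(z : ℂ) - Complex.I * ε) ^ M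
                  * φ (-(z : ℂ) - Complex.I * ε)))
          + Complex.I * (∫ y in (0:ℝ)..ε,
              E a (-(B : ℂ) - Complex.I * y) p.1 p.2 * (-(B : ℂ) - Complex.I * y) ^ M
                * φ (-(B : ℂ) - Complex.I * y))
          - Complex.I * (∫ y in (0:ℝ)..ε,
              E a ((B : ℂ) - Complex.I * y) p.1 p.2 * ((B : ℂ) - Complex.I * y) ^ M
                * φ ((B : ℂ) - Complex.I * y)))
        F atTop (Iic ξ ×ˢ Ici τ) := by
  have hB0 : 0 < B := (Real.sqrt_nonneg _).trans_lt hB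
  have hB2 : |a| + ε ^ 2 < 3 * B ^ 2 := by
    have := (Real.sqrt_lt' hB0).1 hB
    linarith
  have hφ : ContinuousOn φ (contourRegion B ε) := hφhol.continuousOn.mono hRU
  have hψm : AEStronglyMeasurable ψ (volume.restrict {lam : ℝ | B ≤ |lam|}) :=
    aestronglyMeasurable_restrict_of_eq_add (measurableSet_le measurable_const measurable_abs)
      hθint.aestronglyMeasurable (hφ.comp_ofReal_of_contourRegion hε.le) hsum
  obtain ⟨Φ, hΦ⟩ := bddAbove_norm_comp_ofReal_sub_I_mul hε.le hφ hφtop hφbot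
  have hreal := (tendstoUniformly_intervalIntegral_real_tail a M hB0 (by omega) hψm hψ)
    |>.tendstoUniformlyOn (s := Iic ξ ×ˢ Ici τ)
  have hlowerEdge := tendstoUniformlyOn_intervalIntegral_lowerEdge_tail ξ M hε hB0 hB2 hτ
    (hφ.comp_ofReal_sub_I_mul ⟨hε.le, le_rfl⟩) fun z hz => hΦ (mem_image_of_mem _ hz)
  exact ⟨_, ((((tendstoUniformlyOn_const_self _ _ _).fun_add hreal).fun_add hlowerEdge).fun_add
    (tendstoUniformlyOn_const_self _ _ _)).fun_sub (tendstoUniformlyOn_const_self _ _ _)⟩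

/-- under the decomposition hypotheses on `θ = φ + ψ` (with `N ≥ 2`,
`ψ = O(λ^{−N})`, `φ` holomorphic on a neighbourhood of `{z − iy : |z| ≥ B, 0 ≤ y ≤ ε}` and
`max_{y∈[0,ε]}|φ(C − iy)| → 0` as `C → ±∞`), for `M ≤ N − 2`, `τ > 0` and `ξ ∈ ℝ`, the
family of deformed-contour partial expressions `F_C(x, t)` converges, as `C → ∞`,
uniformly on `(−∞, ξ] × [τ, ∞)`, to some function `F`. -/
theorem stmt_1 (a ε : ℝ) (hε : 0 < ε) (N : ℕ) (hN : 2 ≤ N) (B : ℝ)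
    (hB : B > Real.sqrt ((|a| + ε ^ 2) / 3))
    (θ : ℝ → ℂ) (hθint : Integrable θ) (hθbdd : ∃ Mθ : ℝ, ∀ lam : ℝ, ‖θ lam‖ ≤ Mθ)
    (ψ : ℝ → ℂ) (φ : ℂ → ℂ) (U : Set ℂ) (hUopen : IsOpen U)
    (hRU : {w : ℂ | ∃ z y : ℝ, B ≤ |z| ∧ 0 ≤ y ∧ y ≤ ε ∧ w = (z : ℂ) - Complex.I * y} ⊆ U)
    (hφhol : DifferentiableOn ℂ φ U)
    (hsum : ∀ lam : ℝ, B ≤ |lam| → θ lam = φ lam + ψ lam)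
    (K : ℝ) (hK : 0 < K)
    (hψ : ∀ lam : ℝ, B ≤ |lam| → ‖ψ lam‖ ≤ K / |lam| ^ N)
    (hφtop : Tendsto (fun C : ℝ =>
        sSup ((fun y : ℝ => ‖φ ((C : ℂ) - Complex.I * y)‖) '' Icc 0 ε))
      atTop (nhds 0))
    (hφbot : Tendsto (fun C : ℝ =>
        sSup ((fun y : ℝ => ‖φ ((C : ℂ) - Complex.I * y)‖) '' Icc 0 ε))
      atBot (nhds 0))
    (M : ℕ) (hM : M ≤ N - 2) (τ : ℝ) (hτ : 0 < τ) (ξ : ℝ) :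
    ∃ F : ℝ × ℝ → ℂ,
      TendstoUniformlyOn
        (fun (C : ℝ) (p : ℝ × ℝ) =>
          (∫ lam in (-B)..B, E a lam p.1 p.2 * (lam : ℂ) ^ M * θ lam)
          + (∫ lam in B..C,
              (E a lam p.1 p.2 * (lam : ℂ) ^ M * ψ lam
                + E a (-(lam : ℂ)) p.1 p.2 * (-(lam : ℂ)) ^ M * ψ (-lam)))
          + (∫ z in B..C,
              (E a ((z : ℂ) - Complex.I * ε) p.1 p.2 * ((z : ℂ) - Complex.I * ε) ^ M
                  * φ ((z : ℂ) - Complex.I * ε)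
                + E a (-(z : ℂ) - Complex.I * ε) p.1 p.2 * (-(z : ℂ) - Complex.I * ε) ^ M
                  * φ (-(z : ℂ) - Complex.I * ε)))
          + Complex.I * (∫ y in (0:ℝ)..ε,
              E a (-(B : ℂ) - Complex.I * y) p.1 p.2 * (-(B : ℂ) - Complex.I * y) ^ M
                * φ (-(B : ℂ) - Complex.I * y))
          - Complex.I * (∫ y in (0:ℝ)..ε,
              E a ((B : ℂ) - Complex.I * y) p.1 p.2 * ((B : ℂ) - Complex.I * y) ^ M
                * φ ((B : ℂ) - Complex.I * y)))
        F atTop (Iic ξ ×ˢ Ici τ) :=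
  stmt_1_general a ε hε N hN B hB θ hθint ψ φ U hRU hφhol hsum K hψ hφtop hφbot M hM τ hτ ξ
end

section
/- For each real t ≠ 0 the improper integral J(t) := lim_{C→∞} ∫_{1/√|t|}^{C} e^{iλ}(1 − e^{iλ³ t}) λ^{−1} dλ exists, and J(t) → 0 as t → 0 through nonzero real values. -/
/-!
Split the integrand as `e^{iλ}/λ - e^{iφ(λ)}/λ` with `φ(λ) = λ + tλ³`. For a phase whose
derivative satisfies `|φ'| ≥ 1` on `[a, ∞)`, integrating by parts against `F = e^{iφ}/(iλφ')`
leaves a remainder of size `O(1/λ²)`, so `∫_a^C e^{iφ}/λ` converges to a limit of norm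
`O(1/a)`. The lower limit `a = 1/√|t|` is exactly where `|tλ²| ≥ 1`, which makes
`|1 + 3tλ²| ≥ 1` and `|6tλ²| ≤ 3|1 + 3tλ²|`; hence `|J(t)| ≤ 7√|t|`.
-/

open Complex Filter intervalIntegral
open MeasureTheory Set

theorem tendsto_intervalIntegral_of_hasDerivAt_add {E : Type*} [NormedAddCommGroup E]
    [NormedSpace ℝ E] [CompleteSpace E] {F f g : ℝ → E} {a : ℝ}
    (hderiv : ∀ x ∈ Ici a, HasDerivAt F (f x + g x) x) (hf : ContinuousOn f (Ici a))
    (hg : IntegrableOn g (Ioi a)) (hF : Tendsto F atTop (nhds 0)) :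
    Tendsto (fun C => ∫ x in a..C, f x) atTop (nhds (-F a - ∫ x in Ioi a, g x)) := by
  have hftc : ∀ C, a ≤ C → F C - F a - ∫ x in a..C, g x = ∫ x in a..C, f x := by
    intro C hC
    have hfi : IntervalIntegrable f volume a C :=
      (hf.mono (uIcc_of_le hC ▸ Icc_subset_Ici_self)).intervalIntegrable
    have hgi : IntervalIntegrable g volume a C :=
      (intervalIntegrable_iff_integrableOn_Ioc_of_le hC).2 (hg.mono_set Ioc_subset_Ioi_self)
    rw [← integral_eq_sub_of_hasDerivAt (fun x hx => hderiv x (uIcc_of_le hC ▸ hx).1)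
      (hfi.add hgi), integral_add hfi hgi, add_sub_cancel_right]
  have hlim := (hF.sub_const (F a)).sub (intervalIntegral_tendsto_integral_Ioi a hg tendsto_id)
  rw [zero_sub] at hlim
  exact hlim.congr' ((eventually_ge_atTop a).mono hftc)

theorem hasDerivAt_cexp_div {φ p : ℝ → ℝ} {p' x : ℝ} (hφ : HasDerivAt φ (p x) x)
    (hp : HasDerivAt p p' x) (hx : x ≠ 0) (hpx : p x ≠ 0) :
    HasDerivAt (fun y => cexp (I * φ y) / (I * ↑(y * p y)))
      (cexp (I * φ x) / x + cexp (I * φ x) * I * ↑(p x + x * p') / ↑(x * p x) ^ 2) x := by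
  have hnum := ((hφ.ofReal_comp).const_mul I).cexp
  have hden := (((hasDerivAt_id' x).mul hp).ofReal_comp).const_mul I
  refine (hnum.div hden (by simp [hx, hpx])).congr_deriv ?_
  have hx' : (x : ℂ) ≠ 0 := ofReal_ne_zero.2 hx
  have hp' : (p x : ℂ) ≠ 0 := ofReal_ne_zero.2 hpx
  simp only [Pi.mul_apply]
  push_cast
  field_simp
  linear_combination (-(p x : ℂ) - x * p') * I_sq

theorem norm_cexp_div_I_mul_le {θ x P : ℝ} (hx : 0 < x) (hP : 1 ≤ |P|) :
    ‖cexp (I * θ) / (I * ↑(x * P))‖ ≤ 1 / x := by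
  simp only [norm_div, norm_mul, norm_exp_I_mul_ofReal, norm_I, norm_real, Real.norm_eq_abs,
    abs_of_pos hx, one_mul]
  gcongr
  nlinarith

theorem norm_cexp_mul_div_sq_le {θ x P P' K : ℝ} (hx : 0 < x) (hP : 1 ≤ |P|)
    (hP' : |x * P'| ≤ K * |P|) :
    ‖cexp (I * θ) * I * ↑(P + x * P') / ↑(x * P) ^ 2‖ ≤ (1 + K) * x ^ (-2 : ℝ) := by
  have hK : 0 ≤ K := nonneg_of_mul_nonneg_left ((abs_nonneg _).trans hP') (one_pos.trans_le hP)
  simp only [norm_div, norm_mul, norm_exp_I_mul_ofReal, norm_I, norm_real, Real.norm_eq_abs,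
    norm_pow, abs_of_pos hx, one_mul, Real.rpow_neg hx.le, Real.rpow_two]
  rw [div_le_iff₀ (by positivity)]
  calc |P + x * P'| ≤ |P| + K * |P| := (abs_add_le _ _).trans (by gcongr)
    _ ≤ (1 + K) * |P| ^ 2 := by
      nlinarith [mul_le_mul_of_nonneg_left hP (by positivity : 0 ≤ (1 + K) * |P|)]
    _ = (1 + K) * (x ^ 2)⁻¹ * (x * |P|) ^ 2 := by field_simp

theorem exists_tendsto_integral_cexp_div {a K : ℝ} (ha : 0 < a) {φ p p' : ℝ → ℝ}
    (hφ : ∀ x ∈ Ici a, HasDerivAt φ (p x) x) (hp : ∀ x ∈ Ici a, HasDerivAt p (p' x) x)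
    (hp'_cont : ContinuousOn p' (Ici a)) (hp_ge : ∀ x ∈ Ici a, 1 ≤ |p x|)
    (hp'_le : ∀ x ∈ Ici a, |x * p' x| ≤ K * |p x|) :
    ∃ L : ℂ, Tendsto (fun C => ∫ x in a..C, cexp (I * φ x) / x) atTop (nhds L) ∧
      ‖L‖ ≤ (2 + K) / a := by
  set F : ℝ → ℂ := fun y => cexp (I * φ y) / (I * ↑(y * p y))
  set g : ℝ → ℂ := fun y => cexp (I * φ y) * I * ↑(p y + y * p' y) / ↑(y * p y) ^ 2
  have hpos : ∀ x ∈ Ici a, 0 < x := fun x hx => ha.trans_le hx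
  have hp_ne : ∀ x ∈ Ici a, p x ≠ 0 := fun x hx => abs_pos.1 (one_pos.trans_le (hp_ge x hx))
  have hφc : ContinuousOn φ (Ici a) := fun x hx => (hφ x hx).continuousAt.continuousWithinAt
  have hpc : ContinuousOn p (Ici a) := fun x hx => (hp x hx).continuousAt.continuousWithinAt
  have hderiv : ∀ x ∈ Ici a, HasDerivAt F (cexp (I * φ x) / x + g x) x := fun x hx =>
    hasDerivAt_cexp_div (hφ x hx) (hp x hx) (hpos x hx).ne' (hp_ne x hx)
  have hfc : ContinuousOn (fun x : ℝ => cexp (I * φ x) / x) (Ici a) :=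
    ContinuousOn.div (by fun_prop) (by fun_prop) fun x hx => ofReal_ne_zero.2 (hpos x hx).ne'
  have hgc : ContinuousOn g (Ici a) := ContinuousOn.div (by fun_prop) (by fun_prop) fun x hx =>
    pow_ne_zero 2 (ofReal_ne_zero.2 (mul_ne_zero (hpos x hx).ne' (hp_ne x hx)))
  have hmaj : IntegrableOn (fun x : ℝ => (1 + K) * x ^ (-2 : ℝ)) (Ioi a) :=
    (integrableOn_Ioi_rpow_of_lt (by norm_num) ha).const_mul _
  have hg_le : ∀ᵐ x ∂volume.restrict (Ioi a), ‖g x‖ ≤ (1 + K) * x ^ (-2 : ℝ) :=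
    ae_restrict_of_forall_mem measurableSet_Ioi fun x hx => by
      have hx' := Ioi_subset_Ici_self hx
      exact norm_cexp_mul_div_sq_le (hpos x hx') (hp_ge x hx') (hp'_le x hx')
  have hg : IntegrableOn g (Ioi a) :=
    hmaj.mono' ((hgc.mono Ioi_subset_Ici_self).aestronglyMeasurable measurableSet_Ioi) hg_le
  have hF_le : ∀ x ∈ Ici a, ‖F x‖ ≤ 1 / x := fun x hx =>
    norm_cexp_div_I_mul_le (hpos x hx) (hp_ge x hx)
  have hF : Tendsto F atTop (nhds 0) :=
    squeeze_zero_norm' ((eventually_ge_atTop a).mono fun x hx => (hF_le x hx).trans_eq (one_div x))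
      tendsto_inv_atTop_zero
  refine ⟨_, tendsto_intervalIntegral_of_hasDerivAt_add hderiv hfc hg hF, ?_⟩
  have hmaj_int : ∫ x in Ioi a, (1 + K) * x ^ (-2 : ℝ) = (1 + K) / a := by
    rw [MeasureTheory.integral_const_mul, integral_Ioi_rpow_of_lt (by norm_num) ha]
    norm_num [Real.rpow_neg_one, div_eq_mul_inv]
  calc ‖-F a - ∫ x in Ioi a, g x‖ ≤ ‖F a‖ + ‖∫ x in Ioi a, g x‖ := by
        simpa using norm_sub_le (-F a) _
    _ ≤ 1 / a + (1 + K) / a :=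
        add_le_add (hF_le a self_mem_Ici) (hmaj_int ▸ norm_integral_le_of_norm_le hmaj hg_le)
    _ = (2 + K) / a := by ring

theorem one_le_abs_one_add_three_mul {s : ℝ} (hs : 1 ≤ |s|) : 1 ≤ |1 + 3 * s| := by
  rcases abs_cases s with ⟨h1, h2⟩ | ⟨h1, h2⟩ <;>
    rcases abs_cases (1 + 3 * s) with ⟨h3, h4⟩ | ⟨h3, h4⟩ <;> linarith

theorem abs_six_mul_le {s : ℝ} (hs : 1 ≤ |s|) : |6 * s| ≤ 3 * |1 + 3 * s| := by
  rcases abs_cases s with ⟨h1, h2⟩ | ⟨h1, h2⟩ <;>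
    rcases abs_cases (1 + 3 * s) with ⟨h3, h4⟩ | ⟨h3, h4⟩ <;>
    rcases abs_cases (6 * s) with ⟨h5, h6⟩ | ⟨h5, h6⟩ <;> linarith

theorem one_le_abs_mul_sq {t x : ℝ} (ht : t ≠ 0) (hx : 1 / √|t| ≤ x) : 1 ≤ |t * x ^ 2| := by
  have hst : 0 < √|t| := Real.sqrt_pos.2 (abs_pos.2 ht)
  have h1 : 1 ≤ x * √|t| := (div_le_iff₀ hst).1 hx
  rw [abs_mul, abs_of_nonneg (sq_nonneg x), ← Real.sq_sqrt (abs_nonneg t)]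
  nlinarith

theorem intervalIntegrable_cexp_div {φ : ℝ → ℝ} (hφ : Continuous φ) {a C : ℝ} (ha : 0 < a)
    (hC : a ≤ C) : IntervalIntegrable (fun x : ℝ => cexp (I * φ x) / x) volume a C :=
  ContinuousOn.intervalIntegrable <| ContinuousOn.div (by fun_prop) (by fun_prop)
    fun x hx => ofReal_ne_zero.2 (ha.trans_le (uIcc_of_le hC ▸ hx).1).ne'

noncomputable def cubicPhaseIntegral (t C : ℝ) : ℂ :=
  ∫ lam in (1 / √|t|)..C, cexp (I * lam) * (1 - cexp (I * (lam : ℂ) ^ 3 * t)) / lam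

theorem exists_tendsto_cubicPhaseIntegral {t : ℝ} (ht : t ≠ 0) :
    ∃ L : ℂ, Tendsto (cubicPhaseIntegral t) atTop (nhds L) ∧ ‖L‖ ≤ 7 * √|t| := by
  have ha : 0 < 1 / √|t| := by positivity
  have hts : ∀ x ∈ Ici (1 / √|t|), 1 ≤ |t * x ^ 2| := fun x hx => one_le_abs_mul_sq ht hx
  obtain ⟨L₁, hL₁, hL₁_le⟩ := exists_tendsto_integral_cexp_div (K := 0) ha (φ := id)
    (fun x _ => hasDerivAt_id x) (fun x _ => hasDerivAt_const x 1) continuousOn_const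
    (fun _ _ => by simp) (fun _ _ => by simp)
  obtain ⟨L₂, hL₂, hL₂_le⟩ := exists_tendsto_integral_cexp_div (K := 3) ha
    (φ := fun x => x + t * x ^ 3) (p := fun x => 1 + 3 * (t * x ^ 2)) (p' := fun x => 6 * t * x)
    (fun x _ => ((hasDerivAt_id' x).add ((hasDerivAt_pow 3 x).const_mul t)).congr_deriv
      (by norm_num; ring))
    (fun x _ => (((hasDerivAt_pow 2 x).const_mul t).const_mul 3 |>.const_add 1).congr_deriv
      (by norm_num; ring))
    (by fun_prop)
    (fun x hx => one_le_abs_one_add_three_mul (hts x hx))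
    (fun x hx => by convert abs_six_mul_le (hts x hx) using 2; ring)
  refine ⟨L₁ - L₂, (hL₁.sub hL₂).congr' ?_, ?_⟩
  · filter_upwards [eventually_ge_atTop (1 / √|t|)] with C hC
    rw [← integral_sub (intervalIntegrable_cexp_div continuous_id ha hC)
      (intervalIntegrable_cexp_div (by fun_prop) ha hC)]
    refine integral_congr fun x _ => ?_
    rw [id, mul_sub, mul_one, ← Complex.exp_add, sub_div]
    push_cast
    ring_nf
  · calc ‖L₁ - L₂‖ ≤ ‖L₁‖ + ‖L₂‖ := norm_sub_le _ _
      _ ≤ (2 + 0) / (1 / √|t|) + (2 + 3) / (1 / √|t|) := add_le_add hL₁_le hL₂_le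
      _ = 7 * √|t| := by field_simp; norm_num

/-- for each real `t ≠ 0` the improper integral
`J(t) = lim_{C→∞} ∫_{1/√|t|}^{C} e^{iλ}(1 − e^{iλ³t}) λ⁻¹ dλ` exists, and `J(t) → 0`
as `t → 0` through nonzero real values. -/
theorem stmt_19 :
    ∃ J : ℝ → ℂ,
      (∀ t : ℝ, t ≠ 0 →
        Tendsto (fun C : ℝ =>
            ∫ lam in (1 / Real.sqrt |t|)..C,
              Complex.exp (Complex.I * lam)
                * (1 - Complex.exp (Complex.I * (lam : ℂ) ^ 3 * t)) / lam)
          atTop (nhds (J t))) ∧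
      Tendsto J (nhdsWithin 0 {t : ℝ | t ≠ 0}) (nhds 0) := by
  refine ⟨fun t => limUnder atTop (cubicPhaseIntegral t), fun t ht =>
    tendsto_nhds_limUnder ((exists_tendsto_cubicPhaseIntegral ht).imp fun _ h => h.1), ?_⟩
  have hbound : ∀ᶠ t in nhdsWithin 0 {t : ℝ | t ≠ 0},
      ‖limUnder atTop (cubicPhaseIntegral t)‖ ≤ 7 * √|t| := by
    filter_upwards [self_mem_nhdsWithin] with t ht
    obtain ⟨L, hL, hL_le⟩ := exists_tendsto_cubicPhaseIntegral ht
    rwa [hL.limUnder_eq]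
  have hsqrt : Tendsto (fun t : ℝ => 7 * √|t|) (nhdsWithin 0 {t : ℝ | t ≠ 0}) (nhds 0) := by
    simpa using ((continuous_abs.sqrt.const_mul 7).tendsto 0).mono_left nhdsWithin_le_nhds
  exact squeeze_zero_norm' hbound hsqrt
end
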